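/- arXiv:1910.04675 — 3 statements merged into one kernel-verified Lean document; each statement's English description precedes it below -/
import Mathlib

section
/- Van der Corput inequality along Følner sets: if E ≥ 0 satisfies μ_G(bF △ F) ≤ E·μ_G(F) for every b ∈ B, then |(1/μ_G(F)) ∫_F f(g·x) dμ_G(g)| ≤ ( (1/μ_G(B)²) ∫_B ∫_B |γ_{f,x}(b₁,b₂)| dμ_G(b₁) dμ_G(b₂) )^{1/2} + 2·(sup_{y∈X} |f(y)|)·E. -/
open MeasureTheory Pointwise

/-- Van der Corput inequality along Følner sets. -/
theorem vdc_inequality_along_folner_sets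
    {G X : Type*} [Group G] [TopologicalSpace G] [IsTopologicalGroup G]
    [LocallyCompactSpace G] [MeasurableSpace G] [BorelSpace G]
    [MeasurableSpace X] [MulAction G X]
    (μG : Measure G) [μG.IsHaarMeasure]
    (hact : Measurable fun p : G × X => p.1 • p.2)
    (x : X) (f : X → ℂ) (hf : Measurable f) (hbd : ∃ M : ℝ, ∀ y, ‖f y‖ ≤ M)
    (F B : Set G) (hF : MeasurableSet F) (hB : MeasurableSet B)
    (hF0 : 0 < μG F) (hFfin : μG F < ⊤) (hB0 : 0 < μG B) (hBfin : μG B < ⊤)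
    (E : ℝ) (hE : 0 ≤ E)
    (hFol : ∀ b ∈ B, (μG (symmDiff (b • F) F)).toReal ≤ E * (μG F).toReal) :
    ‖((μG F).toReal)⁻¹ • ∫ g in F, f (g • x) ∂μG‖ ≤
      Real.sqrt (((μG B).toReal ^ 2)⁻¹ *
        ∫ b₁ in B, ∫ b₂ in B,
          ‖((μG F).toReal)⁻¹ • ∫ g in F,
              f ((b₁ * g) • x) * (starRingEnd ℂ) (f ((b₂ * g) • x)) ∂μG‖ ∂μG ∂μG)
      + 2 * (⨆ y, ‖f y‖) * E := by
  classical
  obtain ⟨M₀, hM₀⟩ := hbd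
  set M : ℝ := ⨆ y, ‖f y‖ with hMdef
  have hbdd : BddAbove (Set.range fun y => ‖f y‖) :=
    ⟨M₀, by rintro r ⟨y, rfl⟩; exact hM₀ y⟩
  have hfM : ∀ y, ‖f y‖ ≤ M := fun y => le_ciSup hbdd y
  have hM0 : 0 ≤ M := (norm_nonneg _).trans (hfM x)
  set cF : ℝ := (μG F).toReal with hcFdef
  set cB : ℝ := (μG B).toReal with hcBdef
  have hcF : 0 < cF := ENNReal.toReal_pos hF0.ne' hFfin.ne
  have hcB : 0 < cB := ENNReal.toReal_pos hB0.ne' hBfin.ne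
  haveI hFinF : IsFiniteMeasure (μG.restrict F) :=
    ⟨by rwa [Measure.restrict_apply_univ]⟩
  haveI hFinB : IsFiniteMeasure (μG.restrict B) :=
    ⟨by rwa [Measure.restrict_apply_univ]⟩
  set φ : G → ℂ := fun g => f (g • x) with hφdef
  have hφm : Measurable φ :=
    hf.comp (hact.comp (measurable_id.prodMk measurable_const))
  have hφM : ∀ g, ‖φ g‖ ≤ M := fun g => hfM _
  -- joint measurability
  have hΨm : Measurable fun p : G × G => φ (p.1 * p.2) := by
    have heq : (fun p : G × G => φ (p.1 * p.2))
        = fun p : G × G => f (p.1 • (p.2 • x)) := by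
      funext p; simp [hφdef, mul_smul]
    rw [heq]
    exact hf.comp (hact.comp (measurable_fst.prodMk
      (hact.comp (measurable_snd.prodMk measurable_const))))
  -- translation identity
  have htrans : ∀ b : G, ∫ g in F, φ (b * g) ∂μG = ∫ g in b • F, φ g ∂μG := by
    intro b
    have h1 : MeasurePreserving (fun g : G => b * g) μG μG :=
      measurePreserving_mul_left μG b
    have h2 := h1.setIntegral_preimage_emb (measurableEmbedding_mulLeft b) φ (b • F)
    have h3 : (fun g : G => b * g) ⁻¹' (b • F) = F := by
      have : (fun g : G => b * g) = (fun g : G => b • g) := by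
        funext g; rw [smul_eq_mul]
      rw [this, Set.preimage_smul, inv_smul_smul]
    rw [h3] at h2
    exact h2
  -- symmetric difference bound
  have hsd : ∀ b ∈ B,
      ‖(∫ g in b • F, φ g ∂μG) - ∫ g in F, φ g ∂μG‖ ≤ M * (E * cF) := by
    intro b hb
    have hbF : MeasurableSet (b • F) := hF.const_smul b
    have hμbF : μG (b • F) = μG F := measure_smul (μ := μG) b F
    have hbFfin : μG (b • F) < ⊤ := by rwa [hμbF]
    have hintbF : IntegrableOn φ (b • F) μG := by
      haveI : IsFiniteMeasure (μG.restrict (b • F)) :=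
        ⟨by rwa [Measure.restrict_apply_univ]⟩
      exact Integrable.mono' (integrable_const M) hφm.aestronglyMeasurable
        (Filter.Eventually.of_forall hφM)
    have hintF : IntegrableOn φ F μG :=
      Integrable.mono' (integrable_const M) hφm.aestronglyMeasurable
        (Filter.Eventually.of_forall hφM)
    have h1 := integral_inter_add_diff (f := φ) (μ := μG) (s := b • F) (t := F) hF hintbF
    have h2 := integral_inter_add_diff (f := φ) (μ := μG) (s := F) (t := b • F) hbF hintF
    have hfin1 : μG ((b • F) \ F) ≠ ⊤ :=
      ((measure_mono Set.diff_subset).trans_lt hbFfin).ne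
    have hfin2 : μG (F \ (b • F)) ≠ ⊤ :=
      ((measure_mono Set.diff_subset).trans_lt hFfin).ne
    have hnorm1 : ‖∫ g in (b • F) \ F, φ g ∂μG‖ ≤ M * (μG ((b • F) \ F)).toReal :=
      norm_setIntegral_le_of_norm_le_const ((measure_mono Set.diff_subset).trans_lt hbFfin)
        (fun g _ => hφM g)
    have hnorm2 : ‖∫ g in F \ (b • F), φ g ∂μG‖ ≤ M * (μG (F \ (b • F))).toReal :=
      norm_setIntegral_le_of_norm_le_const ((measure_mono Set.diff_subset).trans_lt hFfin)
        (fun g _ => hφM g)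
    have hsymm : (μG ((b • F) \ F)).toReal + (μG (F \ (b • F))).toReal
        = (μG (symmDiff (b • F) F)).toReal := by
      rw [symmDiff_def]
      have : ((b • F) \ F) ⊔ (F \ (b • F)) = ((b • F) \ F) ∪ (F \ (b • F)) := rfl
      rw [this, measure_union disjoint_sdiff_sdiff (hF.diff hbF),
        ENNReal.toReal_add hfin1 hfin2]
    calc ‖(∫ g in b • F, φ g ∂μG) - ∫ g in F, φ g ∂μG‖
        = ‖(∫ g in (b • F) \ F, φ g ∂μG) - ∫ g in F \ (b • F), φ g ∂μG‖ := by
          rw [← h1, ← h2, Set.inter_comm]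
          congr 1
          ring
      _ ≤ ‖∫ g in (b • F) \ F, φ g ∂μG‖ + ‖∫ g in F \ (b • F), φ g ∂μG‖ :=
          norm_sub_le _ _
      _ ≤ M * (μG ((b • F) \ F)).toReal + M * (μG (F \ (b • F))).toReal :=
          add_le_add hnorm1 hnorm2
      _ = M * (μG (symmDiff (b • F) F)).toReal := by rw [← hsymm]; ring
      _ ≤ M * (E * cF) := by
          have := hFol b hb
          exact mul_le_mul_of_nonneg_left this hM0
  -- per-b normalized bound
  have hAb : ∀ b ∈ B,
      ‖(cF⁻¹ • ∫ g in F, φ g ∂μG) - cF⁻¹ • ∫ g in F, φ (b * g) ∂μG‖ ≤ M * E := by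
    intro b hb
    rw [htrans b, ← smul_sub, norm_smul, norm_sub_rev]
    have h1 : ‖(cF⁻¹ : ℝ)‖ = cF⁻¹ := by
      rw [Real.norm_eq_abs, abs_of_pos (inv_pos.mpr hcF)]
    rw [h1]
    calc cF⁻¹ * ‖(∫ g in b • F, φ g ∂μG) - ∫ g in F, φ g ∂μG‖
        ≤ cF⁻¹ * (M * (E * cF)) :=
          mul_le_mul_of_nonneg_left (hsd b hb) (inv_pos.mpr hcF).le
      _ = M * E := by field_simp
  -- Φ : averaged translate
  set Φ : G → ℂ := fun b => ∫ g in F, φ (b * g) ∂μG with hΦdef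
  have hΦsm : StronglyMeasurable Φ :=
    hΨm.stronglyMeasurable.integral_prod_right' (ν := μG.restrict F)
  have hΦM : ∀ b, ‖Φ b‖ ≤ M * cF := fun b =>
    norm_setIntegral_le_of_norm_le_const hFfin (fun g _ => hφM _)
  have hΦint : IntegrableOn Φ B μG :=
    Integrable.mono' (integrable_const (M * cF)) hΦsm.aestronglyMeasurable
      (Filter.Eventually.of_forall hΦM)
  -- Step (a): compare with average over B
  set A : ℂ := ∫ g in F, φ g ∂μG with hAdef
  set I₁ : ℂ := cB⁻¹ • ∫ b in B, (cF⁻¹ • Φ b) ∂μG with hI₁def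
  have hstep1 : ‖cF⁻¹ • A‖ ≤ ‖I₁‖ + M * E := by
    have hdiff : cF⁻¹ • A - I₁ = cB⁻¹ • ∫ b in B, ((cF⁻¹ • A) - cF⁻¹ • Φ b) ∂μG := by
      have hΦint' : Integrable (fun b => cF⁻¹ • Φ b) (μG.restrict B) :=
        hΦint.smul cF⁻¹
      rw [integral_sub (integrable_const _) hΦint', integral_const,
        measureReal_restrict_apply_univ, Measure.real, smul_sub, smul_smul, ← hcBdef]
      rw [inv_mul_cancel₀ hcB.ne', one_smul, ← hI₁def]
    have hnorm : ‖cF⁻¹ • A - I₁‖ ≤ M * E := by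
      rw [hdiff, norm_smul, Real.norm_eq_abs, abs_of_pos (inv_pos.mpr hcB)]
      have hB' : ‖∫ b in B, ((cF⁻¹ • A) - cF⁻¹ • Φ b) ∂μG‖ ≤ (M * E) * cB :=
        norm_setIntegral_le_of_norm_le_const hBfin (fun b hb => hAb b hb)
      calc cB⁻¹ * ‖∫ b in B, ((cF⁻¹ • A) - cF⁻¹ • Φ b) ∂μG‖
          ≤ cB⁻¹ * ((M * E) * cB) :=
            mul_le_mul_of_nonneg_left hB' (inv_pos.mpr hcB).le
        _ = M * E := by field_simp
    calc ‖cF⁻¹ • A‖ = ‖I₁ + (cF⁻¹ • A - I₁)‖ := by congr 1; ring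
      _ ≤ ‖I₁‖ + ‖cF⁻¹ • A - I₁‖ := norm_add_le _ _
      _ ≤ ‖I₁‖ + M * E := by linarith
  -- Step (b): Fubini
  have hBFint : Integrable (Function.uncurry fun b g => φ (b * g))
      ((μG.restrict B).prod (μG.restrict F)) :=
    Integrable.mono' (integrable_const M) hΨm.aestronglyMeasurable
      (Filter.Eventually.of_forall fun p => hφM _)
  set h : G → ℂ := fun g => ∫ b in B, φ (b * g) ∂μG with hhdef
  have hhsm : StronglyMeasurable h :=
    hΨm.stronglyMeasurable.integral_prod_left' (μ := μG.restrict B)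
  have hswap : ∫ b in B, Φ b ∂μG = ∫ g in F, h g ∂μG :=
    integral_integral_swap hBFint
  -- Cauchy-Schwarz
  set S : ℝ := ∫ g in F, ‖h g‖ ^ 2 ∂μG with hSdef
  have hS0 : 0 ≤ S := integral_nonneg fun g => sq_nonneg _
  have hCS : ‖∫ g in F, h g ∂μG‖ ≤ Real.sqrt S * Real.sqrt cF := by
    have h22 : Real.HolderConjugate 2 2 := Real.holderConjugate_iff.mpr ⟨one_lt_two, by norm_num⟩
    have hm1 : MemLp (fun g => ‖h g‖) (ENNReal.ofReal 2) (μG.restrict F) :=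
      MemLp.of_bound hhsm.norm.aestronglyMeasurable (M * cB)
        (Filter.Eventually.of_forall fun g => by
          rw [norm_norm]
          exact norm_setIntegral_le_of_norm_le_const hBfin (fun b _ => hφM _))
    have hm2 : MemLp (fun _ : G => (1 : ℝ)) (ENNReal.ofReal 2) (μG.restrict F) :=
      memLp_const 1
    have key := integral_mul_le_Lp_mul_Lq_of_nonneg h22
      (Filter.Eventually.of_forall fun g => norm_nonneg (h g))
      (Filter.Eventually.of_forall fun _ : G => zero_le_one) hm1 hm2
    have e1 : ∫ g in F, ‖h g‖ * 1 ∂μG = ∫ g in F, ‖h g‖ ∂μG := by simp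
    have e2 : ∫ g in F, ‖h g‖ ^ (2 : ℝ) ∂μG = S := by
      rw [hSdef]
      refine integral_congr_ae (Filter.Eventually.of_forall fun g => ?_)
      show ‖h g‖ ^ (2 : ℝ) = ‖h g‖ ^ (2 : ℕ)
      rw [← Real.rpow_natCast ‖h g‖ 2]
      norm_num
    have e3 : ∫ (_ : G) in F, (1 : ℝ) ^ (2 : ℝ) ∂μG = cF := by
      simp [Real.one_rpow]; rfl
    rw [e1, e2, e3] at key
    calc ‖∫ g in F, h g ∂μG‖ ≤ ∫ g in F, ‖h g‖ ∂μG := norm_integral_le_integral_norm _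
      _ ≤ S ^ (1 / 2 : ℝ) * cF ^ (1 / 2 : ℝ) := key
      _ = Real.sqrt S * Real.sqrt cF := by rw [← Real.sqrt_eq_rpow, ← Real.sqrt_eq_rpow]
  -- Step (d): bound S by double integral of correlations
  set ρ : Measure (G × G) := (μG.restrict B).prod (μG.restrict B) with hρdef
  haveI : IsFiniteMeasure ρ := by rw [hρdef]; infer_instance
  set Ξ : (G × G) × G → ℂ :=
    fun q => φ (q.1.1 * q.2) * (starRingEnd ℂ) (φ (q.1.2 * q.2)) with hΞdef
  have hΞm : Measurable Ξ := by
    apply Measurable.mul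
    · exact hΨm.comp ((measurable_fst.fst).prodMk measurable_snd)
    · exact continuous_star.measurable.comp
        (hΨm.comp ((measurable_fst.snd).prodMk measurable_snd))
  have hΞM : ∀ q, ‖Ξ q‖ ≤ M * M := by
    intro q
    have e : ‖Ξ q‖ = ‖φ (q.1.1 * q.2)‖ * ‖φ (q.1.2 * q.2)‖ := by
      rw [hΞdef, norm_mul, RCLike.norm_conj]
    rw [e]
    exact mul_le_mul (hφM _) (hφM _) (norm_nonneg _) hM0
  have hpoint : ∀ g : G, ‖h g‖ ^ 2 = (∫ p, Ξ (p, g) ∂ρ).re := by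
    intro g
    have e : ∫ p, Ξ (p, g) ∂ρ = h g * (starRingEnd ℂ) (h g) := by
      rw [hρdef,
        integral_prod_mul (f := fun b => φ (b * g))
          (g := fun b => (starRingEnd ℂ) (φ (b * g))), integral_conj]
    rw [e, Complex.mul_conj, Complex.ofReal_re, Complex.normSq_eq_norm_sq]
  have huint : Integrable (fun g => ∫ p, Ξ (p, g) ∂ρ) (μG.restrict F) := by
    have hsm : StronglyMeasurable fun g => ∫ p, Ξ (p, g) ∂ρ :=
      hΞm.stronglyMeasurable.integral_prod_left'
    refine Integrable.mono' (integrable_const ((M * M) * (ρ Set.univ).toReal))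
      hsm.aestronglyMeasurable (Filter.Eventually.of_forall fun g => ?_)
    exact norm_integral_le_of_norm_le_const
      (Filter.Eventually.of_forall fun p => hΞM (p, g))
  have hSre : S = (∫ g in F, (∫ p, Ξ (p, g) ∂ρ) ∂μG).re := by
    rw [hSdef]
    rw [show (∫ g in F, ‖h g‖ ^ 2 ∂μG) = ∫ g in F, (∫ p, Ξ (p, g) ∂ρ).re ∂μG from
      integral_congr_ae (Filter.Eventually.of_forall fun g => hpoint g)]
    exact Complex.reCLM.integral_comp_comm huint
  have hFρint : Integrable (Function.uncurry fun g p => Ξ (p, g))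
      ((μG.restrict F).prod ρ) :=
    Integrable.mono' (integrable_const (M * M))
      (hΞm.comp measurable_swap).aestronglyMeasurable
      (Filter.Eventually.of_forall fun q => hΞM _)
  have hswap2 : ∫ g in F, (∫ p, Ξ (p, g) ∂ρ) ∂μG = ∫ p, (∫ g in F, Ξ (p, g) ∂μG) ∂ρ :=
    integral_integral_swap hFρint
  have hγsm : StronglyMeasurable fun p : G × G => ∫ g in F, Ξ (p, g) ∂μG :=
    hΞm.stronglyMeasurable.integral_prod_right'
  have hnormint : Integrable (fun p : G × G => ‖∫ g in F, Ξ (p, g) ∂μG‖) ρ := by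
    refine Integrable.mono' (integrable_const ((M * M) * cF)) hγsm.norm.aestronglyMeasurable
      (Filter.Eventually.of_forall fun p => ?_)
    rw [norm_norm]
    exact norm_setIntegral_le_of_norm_le_const hFfin (fun g _ => hΞM _)
  set T : ℝ := ∫ b₁ in B, ∫ b₂ in B,
      ‖∫ g in F, φ (b₁ * g) * (starRingEnd ℂ) (φ (b₂ * g)) ∂μG‖ ∂μG ∂μG with hTdef
  have hTeq : ∫ p, ‖∫ g in F, Ξ (p, g) ∂μG‖ ∂ρ = T := by
    rw [hρdef] at hnormint ⊢
    rw [hTdef]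
    exact integral_prod _ hnormint
  have hST : S ≤ T := by
    calc S = (∫ g in F, (∫ p, Ξ (p, g) ∂ρ) ∂μG).re := hSre
      _ = (∫ p, (∫ g in F, Ξ (p, g) ∂μG) ∂ρ).re := by rw [hswap2]
      _ ≤ ‖∫ p, (∫ g in F, Ξ (p, g) ∂μG) ∂ρ‖ :=
          Complex.re_le_norm _
      _ ≤ ∫ p, ‖∫ g in F, Ξ (p, g) ∂μG‖ ∂ρ := norm_integral_le_integral_norm _
      _ = T := hTeq
  -- assemble
  have hI₁norm : ‖I₁‖ ≤ Real.sqrt ((cB ^ 2)⁻¹ * (cF⁻¹ * T)) := by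
    have h1 : ‖I₁‖ = cB⁻¹ * (cF⁻¹ * ‖∫ g in F, h g ∂μG‖) := by
      rw [hI₁def,
        show (∫ b in B, cF⁻¹ • Φ b ∂μG) = cF⁻¹ • ∫ b in B, Φ b ∂μG from
          integral_smul _ _,
        hswap, norm_smul, norm_smul, Real.norm_eq_abs, Real.norm_eq_abs,
        abs_of_pos (inv_pos.mpr hcB), abs_of_pos (inv_pos.mpr hcF)]
    have h2 : ‖I₁‖ ≤ cB⁻¹ * (cF⁻¹ * (Real.sqrt S * Real.sqrt cF)) := by
      rw [h1]
      have := mul_le_mul_of_nonneg_left hCS (inv_pos.mpr hcF).le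
      exact mul_le_mul_of_nonneg_left this (inv_pos.mpr hcB).le
    apply Real.le_sqrt_of_sq_le
    have h3 : ‖I₁‖ ^ 2 ≤ (cB⁻¹ * (cF⁻¹ * (Real.sqrt S * Real.sqrt cF))) ^ 2 :=
      pow_le_pow_left₀ (norm_nonneg _) h2 2
    refine h3.trans ?_
    have e : (cB⁻¹ * (cF⁻¹ * (Real.sqrt S * Real.sqrt cF))) ^ 2
        = (cB ^ 2)⁻¹ * (cF⁻¹ * S) := by
      have h4 : Real.sqrt S ^ 2 = S := Real.sq_sqrt hS0
      have h5 : Real.sqrt cF ^ 2 = cF := Real.sq_sqrt hcF.le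
      have e1 : (cB⁻¹ * (cF⁻¹ * (Real.sqrt S * Real.sqrt cF))) ^ 2
          = cB⁻¹ ^ 2 * cF⁻¹ ^ 2 * Real.sqrt S ^ 2 * Real.sqrt cF ^ 2 := by ring
      rw [e1, h4, h5]
      field_simp
    rw [e]
    have : cF⁻¹ * S ≤ cF⁻¹ * T :=
      mul_le_mul_of_nonneg_left hST (inv_pos.mpr hcF).le
    have hcB2 : (0 : ℝ) ≤ (cB ^ 2)⁻¹ := by positivity
    exact mul_le_mul_of_nonneg_left this hcB2
  have hT'eq : (∫ b₁ in B, ∫ b₂ in B,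
      ‖cF⁻¹ • ∫ g in F, φ (b₁ * g) * (starRingEnd ℂ) (φ (b₂ * g)) ∂μG‖ ∂μG ∂μG)
      = cF⁻¹ * T := by
    rw [hTdef]
    simp_rw [norm_smul, Real.norm_eq_abs, abs_of_pos (inv_pos.mpr hcF),
      integral_const_mul]
  have final : ‖cF⁻¹ • A‖ ≤ Real.sqrt ((cB ^ 2)⁻¹ * (cF⁻¹ * T)) + 2 * M * E := by
    have hME : M * E ≤ 2 * M * E := by nlinarith
    linarith [hstep1, hI₁norm]
  show ‖cF⁻¹ • A‖ ≤ Real.sqrt ((cB ^ 2)⁻¹ *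
      ∫ b₁ in B, ∫ b₂ in B,
        ‖cF⁻¹ • ∫ g in F, φ (b₁ * g) * (starRingEnd ℂ) (φ (b₂ * g)) ∂μG‖ ∂μG ∂μG)
      + 2 * M * E
  rw [hT'eq]
  exact final
end

section
/- Sup-norms of polynomial maps are (C,α)-good: let n, m, d ≥ 1, let P₁, …, P_m : ℝⁿ → ℝ be polynomial functions in n variables of total degree at most d, and set ψ(x) := max_{1≤j≤m} |P_j(x)|. Then there exist C > 0 and α > 0, depending only on n and d (not on m or on the P_j), such that ψ is (C,α)-good with respect to Lebesgue measure on ℝⁿ. -/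
open MeasureTheory
open Polynomial Set Metric intervalIntegral
open scoped ENNReal NNReal

section Auxiliary

lemma norm_factorization (p : Polynomial ℝ) (hp : p ≠ 0) (t : ℝ) :
    |p.eval t| = ‖(p.map (algebraMap ℝ ℂ)).leadingCoeff‖ *
      (((p.map (algebraMap ℝ ℂ)).roots).map (fun z => ‖(t:ℂ) - z‖)).prod := by
  set q := p.map (algebraMap ℝ ℂ) with hq
  have hsplit : Splits q := IsAlgClosed.splits q
  have hfact := hsplit.eq_prod_roots
  have h1 : q.eval (t:ℂ) = Complex.ofReal (p.eval t) := by
    rw [hq, eval_map]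
    exact (eval₂_at_apply (algebraMap ℝ ℂ) t).trans rfl
  have h2 : ‖q.eval (t:ℂ)‖ = |p.eval t| := by
    rw [h1, Complex.norm_real, Real.norm_eq_abs]
  rw [← h2]
  conv_lhs => rw [hfact]
  rw [eval_mul, eval_C, norm_mul]
  congr 1
  rw [eval_multiset_prod]
  rw [show (Multiset.map (fun z => ‖(t:ℂ) - z‖) q.roots)
      = Multiset.map (⇑(normHom.toMonoidHom : ℂ →* ℝ)) (Multiset.map (eval (t:ℂ))
          (Multiset.map (fun a => X - C a) q.roots)) by
    simp only [Multiset.map_map, Function.comp_def, eval_sub, eval_X, eval_C]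
    rfl]
  exact ((normHom.toMonoidHom : ℂ →* ℝ).map_multiset_prod _)

lemma prod_lower_bound (t : ℝ) (b δ : ℝ) (hb : 0 < b) (hδ : 0 < δ) (ht : t ∈ Set.Ioc 0 b)
    (R : Multiset ℂ) (hR : ∀ z ∈ R, δ ≤ ‖(t:ℂ) - z‖) :
    (δ / (δ + b)) ^ Multiset.card R * (R.map (fun z => ‖z‖)).prod ≤
      (R.map (fun z => ‖(t:ℂ) - z‖)).prod := by
  have hc0 : 0 < δ / (δ + b) := div_pos hδ (by linarith)
  induction R using Multiset.induction_on with
  | empty => simp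
  | cons a R ih =>
    have hRa : ∀ z ∈ R, δ ≤ ‖(t:ℂ) - z‖ := fun z hz => hR z (Multiset.mem_cons_of_mem hz)
    have ha : δ ≤ ‖(t:ℂ) - a‖ := hR a (Multiset.mem_cons_self a R)
    have key : (δ / (δ + b)) * ‖a‖ ≤ ‖(t:ℂ) - a‖ := by
      have h1 : ‖a‖ ≤ ‖(t:ℂ) - a‖ + b := by
        have : ‖a‖ ≤ ‖(t:ℂ) - a‖ + ‖(t:ℂ)‖ := by
          calc ‖a‖ = ‖(t:ℂ) - ((t:ℂ) - a)‖ := by ring_nf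
          _ ≤ ‖(t:ℂ)‖ + ‖(t:ℂ) - a‖ := norm_sub_le _ _
          _ = ‖(t:ℂ) - a‖ + ‖(t:ℂ)‖ := by ring
        have ht' : ‖(t:ℂ)‖ ≤ b := by
          rw [Complex.norm_real, Real.norm_eq_abs, abs_of_pos ht.1]; exact ht.2
        linarith
      rw [div_mul_eq_mul_div, div_le_iff₀ (by linarith)]
      nlinarith [ha, norm_nonneg ((t:ℂ) - a)]
    simp only [Multiset.map_cons, Multiset.prod_cons, Multiset.card_cons, pow_succ]
    calc (δ / (δ + b)) ^ Multiset.card R * (δ / (δ + b)) * (‖a‖ * (R.map (fun z => ‖z‖)).prod)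
        = ((δ / (δ + b)) * ‖a‖) * ((δ / (δ + b)) ^ Multiset.card R * (R.map (fun z => ‖z‖)).prod) := by
          ring
      _ ≤ ‖(t:ℂ) - a‖ * (R.map (fun z => ‖(t:ℂ) - z‖)).prod := by
          have hnn : 0 ≤ (δ / (δ + b)) ^ Multiset.card R * (R.map (fun z => ‖z‖)).prod := by
            apply mul_nonneg (pow_nonneg hc0.le _)
            exact Multiset.prod_nonneg (by
              intro x hx
              obtain ⟨z, _, rfl⟩ := Multiset.mem_map.1 hx
              exact norm_nonneg z)
          exact mul_le_mul key (ih hRa) hnn (norm_nonneg _)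

lemma eval_lower_bound (d : ℕ) (p : Polynomial ℝ) (hdeg : p.natDegree ≤ d) (hp0 : p.eval 0 ≠ 0)
    (b δ t : ℝ) (hb : 0 < b) (hδ : 0 < δ) (ht : t ∈ Set.Ioc 0 b)
    (hfar : ∀ z ∈ (p.map (algebraMap ℝ ℂ)).roots, δ ≤ ‖(t:ℂ) - z‖) :
    (δ / (δ + b)) ^ d * |p.eval 0| ≤ |p.eval t| := by
  have hp : p ≠ 0 := fun h => hp0 (by simp [h])
  set q := p.map (algebraMap ℝ ℂ) with hq
  have hc0 : 0 < δ / (δ + b) := div_pos hδ (by linarith)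
  have hc1 : δ / (δ + b) ≤ 1 := by
    rw [div_le_one (by linarith)]; linarith
  have hcard : Multiset.card q.roots ≤ d := by
    have h1 : Multiset.card q.roots = q.natDegree :=
      (splits_iff_card_roots.1 (IsAlgClosed.splits q))
    have h2 : q.natDegree = p.natDegree := natDegree_map (algebraMap ℝ ℂ)
    omega
  have h0 := norm_factorization p hp 0
  have ht' := norm_factorization p hp t
  have h0' : |p.eval 0| = ‖q.leadingCoeff‖ * (q.roots.map (fun z => ‖z‖)).prod := by
    rw [h0]
    congr 1
    apply congrArg
    apply Multiset.map_congr rfl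
    intro z _
    simp
  have hprod := prod_lower_bound t b δ hb hδ ht q.roots hfar
  have hLnn : (0:ℝ) ≤ ‖q.leadingCoeff‖ := norm_nonneg _
  have hpownn : (0:ℝ) ≤ (q.roots.map (fun z => ‖z‖)).prod := by
    apply Multiset.prod_nonneg
    intro x hx
    obtain ⟨z, _, rfl⟩ := Multiset.mem_map.1 hx
    exact norm_nonneg z
  calc (δ / (δ + b)) ^ d * |p.eval 0|
      ≤ (δ / (δ + b)) ^ (Multiset.card q.roots) * |p.eval 0| := by
        apply mul_le_mul_of_nonneg_right (pow_le_pow_of_le_one hc0.le hc1 hcard) (abs_nonneg _)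
    _ = ‖q.leadingCoeff‖ * ((δ / (δ + b)) ^ (Multiset.card q.roots)
          * (q.roots.map (fun z => ‖z‖)).prod) := by rw [h0']; ring
    _ ≤ ‖q.leadingCoeff‖ * (q.roots.map (fun z => ‖(t:ℂ) - z‖)).prod :=
        mul_le_mul_of_nonneg_left hprod hLnn
    _ = |p.eval t| := (ht').symm

lemma one_dim_bound (d : ℕ) (hd : 1 ≤ d) (p : Polynomial ℝ) (hdeg : p.natDegree ≤ d)
    (b ε M : ℝ) (hb : 0 < b) (hε : 0 < ε) (hM : 0 < M) (hM' : M ≤ |p.eval 0|) :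
    volume {t : ℝ | t ∈ Set.Ioc 0 b ∧ |p.eval t| < ε} ≤
      ENNReal.ofReal (4 * d * (ε / M) ^ ((d:ℝ)⁻¹) * b) := by
  set s := (ε / M) ^ ((d:ℝ)⁻¹) with hs_def
  have hs0 : 0 < s := Real.rpow_pos_of_pos (div_pos hε hM) _
  have hd0 : (0:ℝ) < d := by exact_mod_cast hd
  by_cases hs : (1:ℝ)/2 ≤ s
  · calc volume {t : ℝ | t ∈ Set.Ioc 0 b ∧ |p.eval t| < ε}
        ≤ volume (Set.Ioc 0 b) := measure_mono (fun t ht => ht.1)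
      _ = ENNReal.ofReal b := by rw [Real.volume_Ioc, sub_zero]
      _ ≤ ENNReal.ofReal (4 * d * s * b) := by
          apply ENNReal.ofReal_le_ofReal
          have h1 : (1:ℝ) ≤ (d:ℝ) := by exact_mod_cast hd
          nlinarith [mul_le_mul_of_nonneg_right
            (show (2:ℝ) ≤ 4 * (d:ℝ) * s by nlinarith) hb.le]
  · push_neg at hs
    have hp0 : p.eval 0 ≠ 0 := by
      intro h; rw [h, abs_zero] at hM'; linarith
    set δ := s * b / (1 - s) with hδ_def
    have h1s : 0 < 1 - s := by linarith
    have hδ0 : 0 < δ := div_pos (mul_pos hs0 hb) h1s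
    have hδb : 0 < δ + b := by linarith
    have hc : δ / (δ + b) = s := by
      rw [div_eq_iff (ne_of_gt hδb), hδ_def]
      field_simp
      ring
    set q := p.map (algebraMap ℝ ℂ) with hq
    have hcover : {t : ℝ | t ∈ Set.Ioc 0 b ∧ |p.eval t| < ε} ⊆
        ⋃ z ∈ q.roots.toFinset, Set.Ioo (z.re - δ) (z.re + δ) := by
      intro t ⟨htI, htε⟩
      by_contra hnot
      simp only [Set.mem_iUnion, exists_prop, not_exists, not_and] at hnot
      have hfar : ∀ z ∈ q.roots, δ ≤ ‖(t:ℂ) - z‖ := by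
        intro z hz
        have h1 : t ∉ Set.Ioo (z.re - δ) (z.re + δ) := by
          intro hmem
          exact hnot z (Multiset.mem_toFinset.2 hz) hmem
        have h2 : δ ≤ |t - z.re| := by
          simp only [Set.mem_Ioo, not_and_or, not_lt] at h1
          rcases h1 with h | h
          · rw [abs_sub_comm, abs_of_nonneg (by linarith)]; linarith
          · rw [abs_of_nonneg (by linarith)]; linarith
        calc δ ≤ |t - z.re| := h2
          _ = |((t:ℂ) - z).re| := by simp
          _ ≤ ‖(t:ℂ) - z‖ := Complex.abs_re_le_norm _
      have hlow := eval_lower_bound d p hdeg hp0 b δ t hb hδ0 htI hfar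
      rw [hc] at hlow
      have hsd : s ^ d = ε / M := by
        rw [hs_def, ← Real.rpow_natCast ((ε/M) ^ ((d:ℝ)⁻¹)) d, ← Real.rpow_mul (div_pos hε hM).le]
        rw [inv_mul_cancel₀ (ne_of_gt hd0), Real.rpow_one]
      have : ε ≤ |p.eval t| := by
        calc ε = (ε / M) * M := by field_simp
          _ = s ^ d * M := by rw [hsd]
          _ ≤ s ^ d * |p.eval 0| := by
              apply mul_le_mul_of_nonneg_left hM' (pow_nonneg hs0.le _)
          _ ≤ |p.eval t| := hlow
      linarith
    have hcard : q.roots.toFinset.card ≤ d := by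
      calc q.roots.toFinset.card ≤ Multiset.card q.roots := Multiset.toFinset_card_le _
        _ = q.natDegree := splits_iff_card_roots.1 (IsAlgClosed.splits q)
        _ = p.natDegree := natDegree_map (algebraMap ℝ ℂ)
        _ ≤ d := hdeg
    have hδ2 : δ ≤ 2 * s * b := by
      rw [hδ_def, div_le_iff₀ h1s]
      have hkey := mul_nonneg (mul_pos hs0 hb).le (show (0:ℝ) ≤ 1 - 2*s by linarith)
      nlinarith [hkey]
    calc volume {t : ℝ | t ∈ Set.Ioc 0 b ∧ |p.eval t| < ε}
        ≤ ∑ z ∈ q.roots.toFinset, volume (Set.Ioo (z.re - δ) (z.re + δ)) :=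
          (measure_mono hcover).trans (measure_biUnion_finset_le _ _)
      _ = ∑ z ∈ q.roots.toFinset, ENNReal.ofReal (2 * δ) := by
          apply Finset.sum_congr rfl
          intro z _
          rw [Real.volume_Ioo]
          congr 1
          ring
      _ = (q.roots.toFinset.card : ℝ≥0∞) * ENNReal.ofReal (2 * δ) := by
          rw [Finset.sum_const, nsmul_eq_mul]
      _ ≤ (d : ℝ≥0∞) * ENNReal.ofReal (2 * δ) := by
          apply mul_le_mul_left
          exact_mod_cast hcard
      _ ≤ (d : ℝ≥0∞) * ENNReal.ofReal (4 * s * b) := by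
          apply mul_le_mul_right
          apply ENNReal.ofReal_le_ofReal
          linarith
      _ = ENNReal.ofReal (4 * d * s * b) := by
          rw [← ENNReal.ofReal_natCast d, ← ENNReal.ofReal_mul (by positivity)]
          congr 1
          ring

noncomputable def linePoly {n : ℕ} (P : MvPolynomial (Fin n) ℝ) (z v : Fin n → ℝ) : Polynomial ℝ :=
  MvPolynomial.aeval (fun i => Polynomial.C (z i) + Polynomial.C (v i) * Polynomial.X) P

lemma linePoly_eval {n : ℕ} (P : MvPolynomial (Fin n) ℝ) (z v : Fin n → ℝ) (t : ℝ) :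
    (linePoly P z v).eval t = MvPolynomial.eval (fun i => z i + v i * t) P := by
  rw [linePoly, MvPolynomial.aeval_def]
  show (Polynomial.evalRingHom t) (MvPolynomial.eval₂ (algebraMap ℝ (Polynomial ℝ))
    (fun i => Polynomial.C (z i) + Polynomial.C (v i) * Polynomial.X) P) = _
  rw [MvPolynomial.eval₂_comp_left (Polynomial.evalRingHom t)]
  have h1 : (Polynomial.evalRingHom t).comp (algebraMap ℝ (Polynomial ℝ)) = RingHom.id ℝ := by
    ext x
    simp
  have h2 : (⇑(Polynomial.evalRingHom t) ∘ fun i => Polynomial.C (z i) + Polynomial.C (v i) * Polynomial.X)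
      = fun i => z i + v i * t := by
    funext i
    simp
  rw [h1, h2]
  rfl

lemma linePoly_natDegree_le {n : ℕ} (P : MvPolynomial (Fin n) ℝ) (z v : Fin n → ℝ) :
    (linePoly P z v).natDegree ≤ P.totalDegree := by
  rw [linePoly, MvPolynomial.aeval_def, MvPolynomial.eval₂_eq]
  apply Polynomial.natDegree_sum_le_of_forall_le
  intro s hs
  calc ((algebraMap ℝ (Polynomial ℝ)) (MvPolynomial.coeff s P) *
        ∏ i ∈ s.support, (Polynomial.C (z i) + Polynomial.C (v i) * Polynomial.X) ^ s i).natDegree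
      ≤ (∏ i ∈ s.support, (Polynomial.C (z i) + Polynomial.C (v i) * Polynomial.X) ^ s i).natDegree := by
        apply Polynomial.natDegree_C_mul_le
    _ ≤ ∑ i ∈ s.support, ((Polynomial.C (z i) + Polynomial.C (v i) * Polynomial.X) ^ s i).natDegree :=
        Polynomial.natDegree_prod_le _ _
    _ ≤ ∑ i ∈ s.support, s i := by
        apply Finset.sum_le_sum
        intro i _
        calc ((Polynomial.C (z i) + Polynomial.C (v i) * Polynomial.X) ^ s i).natDegree
            ≤ s i * (Polynomial.C (z i) + Polynomial.C (v i) * Polynomial.X).natDegree :=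
              Polynomial.natDegree_pow_le
          _ ≤ s i * 1 := by
              apply Nat.mul_le_mul_left
              apply Polynomial.natDegree_add_le_of_degree_le
              · simp
              · exact (Polynomial.natDegree_C_mul_le _ _).trans (by simp)
          _ = s i := Nat.mul_one _
    _ ≤ P.totalDegree := MvPolynomial.le_totalDegree hs


lemma lintegral_pow_Ioo (k : ℕ) (b : ℝ) (hb : 0 < b) :
    ∫⁻ t in Set.Ioo (0:ℝ) b, ENNReal.ofReal (t ^ k) =
      ENNReal.ofReal (b ^ (k+1) / (k+1)) := by
  rw [Measure.restrict_congr_set Ioo_ae_eq_Ioc,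
    ← ofReal_integral_eq_lintegral_ofReal (intervalIntegrable_pow _).1 ?_,
    ← intervalIntegral.integral_of_le hb.le]
  · simp
  · filter_upwards [ae_restrict_mem measurableSet_Ioc] with y hy
    exact pow_nonneg hy.1.le _

lemma section_est (k d : ℕ) (hd : 1 ≤ d) (q : Polynomial ℝ) (hq : q.natDegree ≤ d)
    (ε M : ℝ) (hε : 0 < ε) (hM : 0 < M) (hM' : M ≤ |q.eval 0|)
    (G Abad : Set ℝ) (hGsub : G ⊆ Set.Ioi 0)
    (hGdown : ∀ ⦃t⦄, t ∈ G → Set.Ioo 0 t ⊆ G)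
    (hGbdd : BddAbove G)
    (hAmeas : MeasurableSet Abad)
    (hAG : Abad ⊆ G) (hAq : ∀ t ∈ Abad, |q.eval t| < ε) :
    ∫⁻ t in Abad, ENNReal.ofReal (t ^ k) ≤
      ENNReal.ofReal ((k+1) * (4 * d * (ε / M) ^ ((d:ℝ)⁻¹))) *
        ∫⁻ t in G, ENNReal.ofReal (t ^ k) := by
  rcases Set.eq_empty_or_nonempty G with hG | hG
  · have : Abad = ∅ := Set.eq_empty_of_subset_empty (hG ▸ hAG)
    simp [this]
  · set b := sSup G with hb_def
    obtain ⟨t₀, ht₀⟩ := hG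
    have hb : 0 < b := lt_of_lt_of_le (hGsub ht₀) (le_csSup hGbdd ht₀)
    have hGIoc : G ⊆ Set.Ioc 0 b := fun t ht => ⟨hGsub ht, le_csSup hGbdd ht⟩
    have hIooG : Set.Ioo 0 b ⊆ G := by
      intro t ht
      obtain ⟨g, hgG, hgt⟩ := exists_lt_of_lt_csSup ⟨t₀, ht₀⟩ ht.2
      exact hGdown hgG ⟨ht.1, hgt⟩
    have hs0 : 0 < (ε / M) ^ ((d:ℝ)⁻¹) := Real.rpow_pos_of_pos (div_pos hε hM) _
    set s := (ε / M) ^ ((d:ℝ)⁻¹) with hs_def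
    have step1 : ∫⁻ t in Abad, ENNReal.ofReal (t ^ k) ≤
        ENNReal.ofReal (b ^ k) * ENNReal.ofReal (4 * d * s * b) := by
      have hsub : Abad ⊆ {t : ℝ | t ∈ Set.Ioc 0 b ∧ |q.eval t| < ε} :=
        fun t ht => ⟨hGIoc (hAG ht), hAq t ht⟩
      calc ∫⁻ t in Abad, ENNReal.ofReal (t ^ k)
          ≤ ∫⁻ t in Abad, ENNReal.ofReal (b ^ k) := by
            apply setLIntegral_mono' hAmeas
            intro t ht
            exact ENNReal.ofReal_le_ofReal
                (pow_le_pow_left₀ (hGIoc (hAG ht)).1.le (hGIoc (hAG ht)).2 k)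
        _ = ENNReal.ofReal (b ^ k) * volume Abad := by
            rw [setLIntegral_const]
        _ ≤ ENNReal.ofReal (b ^ k) * ENNReal.ofReal (4 * d * s * b) := by
            apply mul_le_mul_right
            exact (measure_mono hsub).trans (one_dim_bound d hd q hq b ε M hb hε hM hM')
    have step2 : ENNReal.ofReal ((k+1) * (4 * d * s)) *
          ENNReal.ofReal (b ^ (k+1) / (k+1)) ≤
        ENNReal.ofReal ((k+1) * (4 * d * s)) * ∫⁻ t in G, ENNReal.ofReal (t ^ k) := by
      apply mul_le_mul_right
      rw [← lintegral_pow_Ioo k b hb]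
      exact lintegral_mono' (Measure.restrict_mono hIooG le_rfl) le_rfl
    refine step1.trans (le_trans (le_of_eq ?_) step2)
    rw [← ENNReal.ofReal_mul (by positivity), ← ENNReal.ofReal_mul (by positivity)]
    congr 1
    have hk1 : ((k:ℝ)+1) ≠ 0 := by positivity
    field_simp
    ring

variable {E : Type*} [NormedAddCommGroup E] [NormedSpace ℝ E] [MeasurableSpace E]
  [BorelSpace E] [FiniteDimensional ℝ E] [Nontrivial E]

lemma polar_decomp (μ : Measure E) [μ.IsAddHaarMeasure] (S : Set E) (hS : MeasurableSet S) :
    μ S = ∫⁻ θ : sphere (0:E) 1,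
        (Measure.volumeIoiPow (Module.finrank ℝ E - 1))
          {t : Set.Ioi (0:ℝ) | (t : ℝ) • (θ : E) ∈ S} ∂μ.toSphere := by
  have hmp := μ.measurePreserving_homeomorphUnitSphereProd
  set s : Set (sphere (0:E) 1 × Set.Ioi (0:ℝ)) :=
    {p | (p.2 : ℝ) • (p.1 : E) ∈ S} with hs_def
  have hcont : Continuous fun p : sphere (0:E) 1 × Set.Ioi (0:ℝ) => (p.2 : ℝ) • (p.1 : E) := by
    fun_prop
  have hs_meas : MeasurableSet s := hcont.measurable hS
  have hpre : (homeomorphUnitSphereProd E) ⁻¹' s = {x : ({0}ᶜ : Set E) | (x : E) ∈ S} := by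
    ext x
    simp only [Set.mem_preimage, hs_def, Set.mem_setOf_eq,
      homeomorphUnitSphereProd_apply_fst_coe, homeomorphUnitSphereProd_apply_snd_coe]
    rw [smul_inv_smul₀ (norm_ne_zero_iff.2 x.2)]
  have himg : (Subtype.val : ({0}ᶜ : Set E) → E) '' {x : ({0}ᶜ : Set E) | (x : E) ∈ S}
      = S \ {0} := by
    ext y
    constructor
    · rintro ⟨x, hx, rfl⟩
      exact ⟨hx, x.2⟩
    · rintro ⟨hy, hy0⟩
      exact ⟨⟨y, hy0⟩, hy, rfl⟩
  have key : μ (S \ {0}) = (μ.toSphere.prod (Measure.volumeIoiPow (Module.finrank ℝ E - 1))) s := by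
    rw [← hmp.measure_preimage hs_meas.nullMeasurableSet, hpre,
      comap_subtype_coe_apply (measurableSet_singleton (0:E)).compl, himg]
  rw [← measure_diff_null (measure_singleton (0:E)), key, Measure.prod_apply hs_meas]
  rfl

end Auxiliary

/-- A function `φ : ℝⁿ → ℝ` is `(C, α)`-good with respect to Lebesgue measure if for
every bounded open convex set `B` with `sup_{x ∈ B} |φ x| > 0` and every `ε > 0`,
`vol {x ∈ B | |φ x| < ε} ≤ C (ε / sup_{x ∈ B} |φ x|)^α · vol B`. -/
def IsCAlphaGood (n : ℕ) (C α : ℝ) (φ : (Fin n → ℝ) → ℝ) : Prop :=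
  ∀ B : Set (Fin n → ℝ), IsOpen B → Convex ℝ B → Bornology.IsBounded B →
    (0 < ⨆ x ∈ B, |φ x|) → ∀ ε : ℝ, 0 < ε →
      volume {x ∈ B | |φ x| < ε} ≤
        ENNReal.ofReal (C * (ε / ⨆ x ∈ B, |φ x|) ^ α) * volume B

/-- Sup-norms of polynomial maps are `(C, α)`-good, with `C` and `α` depending only
on the number of variables `n` and the degree bound `d`. -/
theorem sup_norm_of_polynomial_maps_is_good
    (n d : ℕ) (hn : 1 ≤ n) (hd : 1 ≤ d) :
    ∃ C : ℝ, 0 < C ∧ ∃ α : ℝ, 0 < α ∧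
      ∀ m : ℕ, 1 ≤ m → ∀ P : Fin m → MvPolynomial (Fin n) ℝ,
        (∀ j, (P j).totalDegree ≤ d) →
        IsCAlphaGood n C α fun x => ⨆ j, |MvPolynomial.eval x (P j)| := by
  have hn' : (0:ℝ) < n := by exact_mod_cast hn
  have hd' : (0:ℝ) < d := by exact_mod_cast hd
  refine ⟨8 * n * d, by positivity, (d:ℝ)⁻¹, by positivity, ?_⟩
  intro m hm P hP
  intro B hBopen hBconv hBbdd hSpos ε hε
  haveI : Nonempty (Fin m) := Fin.pos_iff_nonempty.1 hm
  haveI : Nonempty (Fin n) := Fin.pos_iff_nonempty.1 hn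
  haveI : Nontrivial (Fin n → ℝ) := Function.nontrivial
  set φ : (Fin n → ℝ) → ℝ := fun x => ⨆ j, |MvPolynomial.eval x (P j)| with hφ_def
  set S : ℝ := ⨆ x ∈ B, |φ x| with hS_def
  have hS : 0 < S := hSpos
  have hφnn : ∀ x, 0 ≤ φ x := fun x => Real.iSup_nonneg (fun j => abs_nonneg _)
  -- find a point z ∈ B with φ z > S/2
  obtain ⟨z, hz⟩ := exists_lt_of_lt_ciSup (show S/2 < S by linarith)
  have hzB : z ∈ B := by
    by_contra h
    haveI : IsEmpty (z ∈ B) := ⟨h⟩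
    rw [Real.iSup_of_isEmpty] at hz
    linarith
  haveI : Nonempty (z ∈ B) := ⟨hzB⟩
  rw [ciSup_const] at hz
  rw [abs_of_nonneg (hφnn z)] at hz
  -- find the maximizing index j0 at z
  obtain ⟨j0, hj0⟩ := Finite.exists_max (fun j => |MvPolynomial.eval z (P j)|)
  have hφz : φ z ≤ |MvPolynomial.eval z (P j0)| := ciSup_le hj0
  set M : ℝ := S / 2 with hM_def
  have hM : 0 < M := by positivity
  have hMz : M ≤ |MvPolynomial.eval z (P j0)| := le_trans (le_of_lt hz) hφz
  -- measurability
  have hφm : Measurable φ :=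
    Measurable.iSup (fun j => (MvPolynomial.continuous_eval (p := P j)).measurable.abs)
  set A : Set (Fin n → ℝ) := {x ∈ B | |φ x| < ε} with hA_def
  have hAmeas : MeasurableSet A :=
    hBopen.measurableSet.inter (measurableSet_lt hφm.abs measurable_const)
  have hAB : A ⊆ B := fun x hx => hx.1
  -- translation
  set A' : Set (Fin n → ℝ) := (fun y => z + y) ⁻¹' A with hA'_def
  set B' : Set (Fin n → ℝ) := (fun y => z + y) ⁻¹' B with hB'_def
  have hvolA : volume A' = volume A := measure_preimage_add volume z A
  have hvolB : volume B' = volume B := measure_preimage_add volume z B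
  have haddmeas : Measurable (fun y : Fin n → ℝ => z + y) := measurable_id.const_add z
  have hA'meas : MeasurableSet A' := haddmeas hAmeas
  have hB'meas : MeasurableSet B' := haddmeas hBopen.measurableSet
  -- bounding radius
  obtain ⟨R, hR⟩ := hBbdd.subset_closedBall 0
  -- the constant
  set c : ℝ≥0∞ := ENNReal.ofReal ((((Module.finrank ℝ (Fin n → ℝ) - 1 : ℕ):ℝ)+1) *
    (4 * d * (ε / M) ^ ((d:ℝ)⁻¹))) with hc_def
  -- per-direction estimate
  have hsec : ∀ θ : sphere (0 : Fin n → ℝ) 1,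
      (Measure.volumeIoiPow (Module.finrank ℝ (Fin n → ℝ) - 1))
          {t : Set.Ioi (0:ℝ) | (t : ℝ) • (θ : Fin n → ℝ) ∈ A'}
        ≤ c * (Measure.volumeIoiPow (Module.finrank ℝ (Fin n → ℝ) - 1))
          {t : Set.Ioi (0:ℝ) | (t : ℝ) • (θ : Fin n → ℝ) ∈ B'} := by
    intro θ
    set k := Module.finrank ℝ (Fin n → ℝ) - 1 with hk_def
    have hθnorm : ‖(θ : Fin n → ℝ)‖ = 1 := mem_sphere_zero_iff_norm.1 θ.2
    set q : Polynomial ℝ := linePoly (P j0) z (θ : Fin n → ℝ) with hq_def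
    have hqdeg : q.natDegree ≤ d := (linePoly_natDegree_le _ _ _).trans (hP j0)
    have hq0 : M ≤ |q.eval 0| := by
      rw [hq_def, linePoly_eval]
      have hzz : (fun i => z i + (θ : Fin n → ℝ) i * 0) = z := by
        funext i; ring
      rw [hzz]
      exact hMz
    set G : Set ℝ := {t : ℝ | 0 < t ∧ z + t • (θ : Fin n → ℝ) ∈ B} with hG_def
    set Abad : Set ℝ := {t : ℝ | 0 < t ∧ z + t • (θ : Fin n → ℝ) ∈ A} with hAbad_def
    have hlinemeas : Measurable (fun t : ℝ => z + t • (θ : Fin n → ℝ)) :=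
      (measurable_id.smul_const _).const_add z
    have hGsub : G ⊆ Set.Ioi 0 := fun t ht => ht.1
    have hGdown : ∀ ⦃t⦄, t ∈ G → Set.Ioo 0 t ⊆ G := by
      intro t ht u hu
      refine ⟨hu.1, ?_⟩
      have htpos : 0 < t := ht.1
      have he : (u/t) • (z + t • (θ : Fin n → ℝ)) + (1 - u/t) • z
          = z + u • (θ : Fin n → ℝ) := by
        have h1 : (u/t) * t = u := div_mul_cancel₀ u (ne_of_gt htpos)
        rw [smul_add, smul_smul, h1, sub_smul, one_smul]
        abel
      rw [← he]
      exact hBconv ht.2 hzB (div_nonneg hu.1.le htpos.le) (by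
        have : u/t ≤ 1 := (div_le_one htpos).2 hu.2.le
        linarith) (by ring)
    have hGbdd : BddAbove G := by
      refine ⟨R + ‖z‖, fun t ht => ?_⟩
      have h1 : ‖z + t • (θ : Fin n → ℝ)‖ ≤ R := mem_closedBall_zero_iff.1 (hR ht.2)
      have h2 : ‖t • (θ : Fin n → ℝ)‖ = t := by
        rw [norm_smul, hθnorm, Real.norm_eq_abs, abs_of_pos ht.1, mul_one]
      have h3 : ‖t • (θ : Fin n → ℝ)‖ ≤ ‖z + t • (θ : Fin n → ℝ)‖ + ‖z‖ := by
        calc ‖t • (θ : Fin n → ℝ)‖ = ‖(z + t • (θ : Fin n → ℝ)) - z‖ := by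
              congr 1; abel
          _ ≤ ‖z + t • (θ : Fin n → ℝ)‖ + ‖z‖ := norm_sub_le _ _
      linarith
    have hAbadmeas : MeasurableSet Abad := by
      have : Abad = Set.Ioi 0 ∩ (fun t : ℝ => z + t • (θ : Fin n → ℝ)) ⁻¹' A := by
        ext t; simp [hAbad_def, Set.mem_Ioi, and_comm]
      rw [this]
      exact measurableSet_Ioi.inter (hlinemeas hAmeas)
    have hAG : Abad ⊆ G := fun t ht => ⟨ht.1, hAB ht.2⟩
    have hAq : ∀ t ∈ Abad, |q.eval t| < ε := by
      intro t ht
      have h1 : |φ (z + t • (θ : Fin n → ℝ))| < ε := ht.2.2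
      have h2 : |MvPolynomial.eval (z + t • (θ : Fin n → ℝ)) (P j0)|
          ≤ φ (z + t • (θ : Fin n → ℝ)) :=
        le_ciSup (f := fun j => |MvPolynomial.eval (z + t • (θ : Fin n → ℝ)) (P j)|)
          (Finite.bddAbove_range _) j0
      rw [abs_of_nonneg (hφnn _)] at h1
      have h3 : q.eval t = MvPolynomial.eval (z + t • (θ : Fin n → ℝ)) (P j0) := by
        rw [hq_def, linePoly_eval]
        have hzz : (fun i => z i + (θ : Fin n → ℝ) i * t) = z + t • (θ : Fin n → ℝ) := by
          funext i
          simp only [Pi.add_apply, Pi.smul_apply, smul_eq_mul]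
          ring
        rw [hzz]
      rw [h3]
      linarith
    -- rewrite both sides as lintegrals over ℝ
    have hsubA : MeasurableSet {t : Set.Ioi (0:ℝ) | (t : ℝ) • (θ : Fin n → ℝ) ∈ A'} :=
      (measurable_subtype_coe.smul_const _) hA'meas
    have hsubB : MeasurableSet {t : Set.Ioi (0:ℝ) | (t : ℝ) • (θ : Fin n → ℝ) ∈ B'} :=
      (measurable_subtype_coe.smul_const _) hB'meas
    have himgA : (Subtype.val : Set.Ioi (0:ℝ) → ℝ) ''
        {t : Set.Ioi (0:ℝ) | (t : ℝ) • (θ : Fin n → ℝ) ∈ A'} = Abad := by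
      ext t
      constructor
      · rintro ⟨⟨u, hu⟩, hmem, rfl⟩
        exact ⟨hu, hmem⟩
      · rintro ⟨ht0, hmem⟩
        exact ⟨⟨t, ht0⟩, hmem, rfl⟩
    have himgB : (Subtype.val : Set.Ioi (0:ℝ) → ℝ) ''
        {t : Set.Ioi (0:ℝ) | (t : ℝ) • (θ : Fin n → ℝ) ∈ B'} = G := by
      ext t
      constructor
      · rintro ⟨⟨u, hu⟩, hmem, rfl⟩
        exact ⟨hu, hmem⟩
      · rintro ⟨ht0, hmem⟩
        exact ⟨⟨t, ht0⟩, hmem, rfl⟩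
    rw [Measure.volumeIoiPow, withDensity_apply _ hsubA, withDensity_apply _ hsubB,
      setLIntegral_subtype measurableSet_Ioi _ (fun a : ℝ => ENNReal.ofReal (a ^ k)),
      setLIntegral_subtype measurableSet_Ioi _ (fun a : ℝ => ENNReal.ofReal (a ^ k)),
      himgA, himgB]
    exact section_est k d hd q hqdeg ε M hε hM hq0 G Abad hGsub hGdown hGbdd hAbadmeas hAG hAq
  -- put it together
  have hmain : volume A ≤ c * volume B := by
    rw [← hvolA, ← hvolB, polar_decomp volume A' hA'meas, polar_decomp volume B' hB'meas]
    calc ∫⁻ θ : sphere (0 : Fin n → ℝ) 1, (Measure.volumeIoiPow _)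
          {t : Set.Ioi (0:ℝ) | (t : ℝ) • (θ : Fin n → ℝ) ∈ A'} ∂volume.toSphere
        ≤ ∫⁻ θ : sphere (0 : Fin n → ℝ) 1, c * (Measure.volumeIoiPow _)
          {t : Set.Ioi (0:ℝ) | (t : ℝ) • (θ : Fin n → ℝ) ∈ B'} ∂volume.toSphere :=
          lintegral_mono hsec
      _ = c * _ := lintegral_const_mul' c _ ENNReal.ofReal_ne_top
  refine hmain.trans (mul_le_mul_left ?_ _)
  rw [hc_def]
  apply ENNReal.ofReal_le_ofReal
  have hfr : Module.finrank ℝ (Fin n → ℝ) = n := Module.finrank_fin_fun ℝ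
  have hk1 : (((Module.finrank ℝ (Fin n → ℝ) - 1 : ℕ):ℝ)+1) = (n:ℝ) := by
    rw [hfr]
    have : (n - 1 : ℕ) + 1 = n := Nat.succ_pred_eq_of_pos hn
    exact_mod_cast congrArg (Nat.cast : ℕ → ℝ) this
  rw [hk1]
  have hεM : ε / M = 2 * (ε / S) := by
    rw [hM_def]
    field_simp
  rw [hεM]
  have h2 : (2 * (ε / S)) ^ ((d:ℝ)⁻¹) ≤ 2 * (ε / S) ^ ((d:ℝ)⁻¹) := by
    rw [Real.mul_rpow (by norm_num) (by positivity)]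
    apply mul_le_mul_of_nonneg_right _ (by positivity)
    calc (2:ℝ) ^ ((d:ℝ)⁻¹) ≤ 2 ^ (1:ℝ) := by
          apply Real.rpow_le_rpow_of_exponent_le one_le_two
          rw [inv_le_one_iff₀]  -- (d:ℝ)⁻¹ ≤ 1
          right; exact_mod_cast hd
      _ = 2 := Real.rpow_one 2
  have hx : (0:ℝ) ≤ (ε / S) ^ ((d:ℝ)⁻¹) := by positivity
  nlinarith [mul_le_mul_of_nonneg_left h2 (by positivity : (0:ℝ) ≤ (n:ℝ) * (4 * d))]
end

section
/- Summability of Fourier coefficients of a rescaled bump: let g₁ : ℝⁿ → ℂ be a Schwartz function and for 0 < δ ≤ 1 define g_δ(v) := δ^{−n}·g₁(δ^{−1} v). Then there is a constant C, depending only on g₁ and n, such that Σ_{k ∈ ℤⁿ} |ĝ_δ(k)| ≤ C·δ^{−n}. -/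
open MeasureTheory

/-- The Fourier transform `ĥ(ξ) = ∫ e^{-2πi⟨ξ,v⟩} h(v) dv` of a function on `ℝⁿ`. -/
noncomputable def fourierTransformAt (n : ℕ) (h : EuclideanSpace ℝ (Fin n) → ℂ)
    (ξ : EuclideanSpace ℝ (Fin n)) : ℂ :=
  ∫ v, Complex.exp (-(2 * Real.pi * Complex.I) * ((inner ℝ ξ v : ℝ) : ℂ)) * h v

open scoped FourierTransform RealInnerProductSpace
open Real Finset

lemma aux_abs_coord_le_norm {n : ℕ} (x : EuclideanSpace ℝ (Fin n)) (i : Fin n) :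
    |x i| ≤ ‖x‖ := by
  rw [EuclideanSpace.norm_eq, ← Real.sqrt_sq_eq_abs]
  apply Real.sqrt_le_sqrt
  simp only [Real.norm_eq_abs, sq_abs]
  exact Finset.single_le_sum (f := fun j => x j ^ 2) (fun j _ => sq_nonneg _) (Finset.mem_univ i)

lemma aux_sum_range (δ : ℝ) (hδ : 0 < δ) (M : ℕ) :
    ∑ i ∈ Finset.range M, ((1 + δ * ((i : ℝ) + 1)) ^ 2)⁻¹ ≤ δ⁻¹ := by
  have key : ∀ i : ℕ, ((1 + δ * ((i : ℝ) + 1)) ^ 2)⁻¹ ≤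
      δ⁻¹ * ((1 + δ * i)⁻¹ - (1 + δ * ((i : ℝ) + 1))⁻¹) := by
    intro i
    have h1 : (0:ℝ) < 1 + δ * i := by positivity
    have h2 : (0:ℝ) < 1 + δ * ((i : ℝ) + 1) := by positivity
    have e : δ⁻¹ * ((1 + δ * (i:ℝ))⁻¹ - (1 + δ * ((i:ℝ)+1))⁻¹)
        = ((1 + δ * i) * (1 + δ * ((i:ℝ)+1)))⁻¹ := by
      field_simp
      ring
    rw [e]
    apply inv_anti₀ (by positivity)
    nlinarith
  calc ∑ i ∈ Finset.range M, ((1 + δ * ((i : ℝ) + 1)) ^ 2)⁻¹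
      ≤ ∑ i ∈ Finset.range M, δ⁻¹ * ((1 + δ * i)⁻¹ - (1 + δ * ((i : ℝ) + 1))⁻¹) :=
        Finset.sum_le_sum fun i _ => key i
    _ = δ⁻¹ * ((1 + δ * ((0:ℕ):ℝ))⁻¹ - (1 + δ * ((M:ℕ):ℝ))⁻¹) := by
        rw [← Finset.mul_sum]
        congr 1
        have := Finset.sum_range_sub' (f := fun i : ℕ => (1 + δ * (i:ℝ))⁻¹) M
        simpa [Nat.cast_succ] using this
    _ ≤ δ⁻¹ * 1 := by
        apply mul_le_mul_of_nonneg_left ?_ (by positivity)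
        have hM : (0:ℝ) ≤ (1 + δ * ((M:ℕ):ℝ))⁻¹ := by positivity
        have : (1 + δ * (((0:ℕ)):ℝ))⁻¹ = 1 := by norm_num
        rw [this]
        linarith
    _ = δ⁻¹ := mul_one _

lemma aux_int_finset (δ : ℝ) (hδ : 0 < δ) (hδ1 : δ ≤ 1) (T : Finset ℤ) :
    ∑ m ∈ T, ((1 + δ * |(m : ℝ)|) ^ 2)⁻¹ ≤ 4 * δ⁻¹ := by
  classical
  set g : ℕ → ℝ := fun j => ((1 + δ * j) ^ 2)⁻¹ with hg
  have hgnn : ∀ j, 0 ≤ g j := fun j => by positivity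
  have h1 : ∀ m : ℤ, ((1 + δ * |(m : ℝ)|) ^ 2)⁻¹ = g m.natAbs := by
    intro m
    have : ((m.natAbs : ℝ)) = |(m:ℝ)| := by rw [Nat.cast_natAbs, Int.cast_abs]
    simp only [hg, this]
  calc ∑ m ∈ T, ((1 + δ * |(m : ℝ)|) ^ 2)⁻¹
      = ∑ m ∈ T, g m.natAbs := by simp_rw [h1]
    _ = ∑ j ∈ T.image Int.natAbs, ({m ∈ T | m.natAbs = j}.card) • g j :=
        Finset.sum_comp g Int.natAbs
    _ ≤ ∑ j ∈ T.image Int.natAbs, 2 * g j := by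
        apply Finset.sum_le_sum
        intro j _
        rw [nsmul_eq_mul]
        have hcard : {m ∈ T | m.natAbs = j}.card ≤ 2 := by
          have hsub : {m ∈ T | m.natAbs = j} ⊆ {(j : ℤ), -(j : ℤ)} := by
            intro m hm
            simp only [Finset.mem_filter] at hm
            rcases Int.natAbs_eq m with h | h
            · have : m = (j:ℤ) := by rw [h, hm.2]
              simp [this]
            · have : m = -(j:ℤ) := by rw [h, hm.2]
              simp [this]
          exact (Finset.card_le_card hsub).trans
            ((Finset.card_insert_le _ _).trans (by simp))
        exact mul_le_mul_of_nonneg_right (by exact_mod_cast hcard) (hgnn j)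
    _ = 2 * ∑ j ∈ T.image Int.natAbs, g j := by rw [Finset.mul_sum]
    _ ≤ 2 * ∑ j ∈ Finset.range ((T.image Int.natAbs).sup id + 1), g j := by
        apply mul_le_mul_of_nonneg_left ?_ (by norm_num)
        apply Finset.sum_le_sum_of_subset_of_nonneg
        · intro j hj
          exact Finset.mem_range.mpr (Nat.lt_succ_of_le (Finset.le_sup (f := id) hj))
        · intro j _ _
          exact hgnn j
    _ ≤ 2 * (δ⁻¹ + 1) := by
        apply mul_le_mul_of_nonneg_left ?_ (by norm_num)
        rw [Finset.sum_range_succ']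
        have hs : ∑ i ∈ Finset.range ((T.image Int.natAbs).sup id), g (i + 1) ≤ δ⁻¹ := by
          refine le_trans (le_of_eq ?_) (aux_sum_range δ hδ ((T.image Int.natAbs).sup id))
          apply Finset.sum_congr rfl
          intro i _
          simp [hg, Nat.cast_succ]
        have h0 : g 0 = 1 := by simp [hg]
        rw [h0]
        linarith
    _ ≤ 4 * δ⁻¹ := by
        have h1' : (1:ℝ) ≤ δ⁻¹ := (one_le_inv_iff₀).mpr ⟨hδ, hδ1⟩
        linarith

lemma aux_scale {n : ℕ} (g₁ : SchwartzMap (EuclideanSpace ℝ (Fin n)) ℂ)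
    {δ : ℝ} (hδ : 0 < δ) (ξ : EuclideanSpace ℝ (Fin n)) :
    fourierTransformAt n (fun v => ((δ ^ n)⁻¹ : ℝ) • g₁ (δ⁻¹ • v)) ξ = 𝓕 ⇑g₁ (δ • ξ) := by
  have hδn : (0:ℝ) < δ ^ n := pow_pos hδ n
  unfold fourierTransformAt
  set F : EuclideanSpace ℝ (Fin n) → ℂ :=
    fun v => Complex.exp (-(2 * Real.pi * Complex.I) * ((inner ℝ ξ v : ℝ) : ℂ)) *
      (((δ ^ n)⁻¹ : ℝ) • g₁ (δ⁻¹ • v)) with hF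
  have h1 : ∫ x, F (δ • x) = |(δ ^ Module.finrank ℝ (EuclideanSpace ℝ (Fin n)))⁻¹| • ∫ x, F x :=
    MeasureTheory.Measure.integral_comp_smul volume F δ
  rw [finrank_euclideanSpace_fin, abs_of_pos (inv_pos.mpr hδn)] at h1
  have h2 : ∀ x, F (δ • x) = ((δ ^ n)⁻¹ : ℝ) •
      (Complex.exp ((↑(-2 * Real.pi * (⟪x, δ • ξ⟫ : ℝ)) : ℂ) * Complex.I) • g₁ x) := by
    intro x
    simp only [hF]
    rw [smul_smul, inv_mul_cancel₀ hδ.ne', one_smul, mul_smul_comm]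
    congr 1
    have hin : (inner ℝ ξ (δ • x) : ℝ) = (inner ℝ x (δ • ξ) : ℝ) := by
      rw [real_inner_smul_right, real_inner_smul_right, real_inner_comm]
    rw [hin]
    congr 1
    push_cast
    ring
  have h3 : ∫ x, F (δ • x) = ((δ ^ n)⁻¹ : ℝ) • 𝓕 ⇑g₁ (δ • ξ) := by
    simp_rw [h2]
    rw [integral_smul, Real.fourier_eq']
  rw [h3] at h1
  exact ((smul_right_injective ℂ (inv_ne_zero hδn.ne')) h1).symm

lemma aux_decay {n : ℕ} (f : SchwartzMap (EuclideanSpace ℝ (Fin n)) ℂ) :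
    ∃ D : ℝ, 0 ≤ D ∧ ∀ x, (1 + ‖x‖) ^ (2 * n) * ‖f x‖ ≤ D := by
  refine ⟨2 ^ (2*n) * (Finset.Iic ((2*n : ℕ), (0:ℕ))).sup
      (fun m => SchwartzMap.seminorm ℝ m.1 m.2) f,
    mul_nonneg (by positivity) (apply_nonneg _ _), fun x => ?_⟩
  have := SchwartzMap.one_add_le_sup_seminorm_apply (𝕜 := ℝ) (m := (2*n, 0)) le_rfl le_rfl f x
  simpa [norm_iteratedFDeriv_zero] using this

/-- Summability of Fourier coefficients of a rescaled bump: if `g₁` is Schwartz and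
`g_δ(v) = δ⁻ⁿ g₁(δ⁻¹ v)`, then `Σ_{k ∈ ℤⁿ} |ĝ_δ(k)| ≤ C δ⁻ⁿ` with `C` depending only
on `g₁` and `n`. -/
theorem summable_fourier_coeffs_of_rescaled_bump
    (n : ℕ) (g₁ : SchwartzMap (EuclideanSpace ℝ (Fin n)) ℂ) :
    ∃ C : ℝ, ∀ δ : ℝ, 0 < δ → δ ≤ 1 →
      (Summable fun k : Fin n → ℤ =>
        ‖fourierTransformAt n (fun v => ((δ ^ n)⁻¹ : ℝ) • g₁ (δ⁻¹ • v))
            (WithLp.toLp 2 (fun i => (k i : ℝ)) : EuclideanSpace ℝ (Fin n))‖) ∧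
      (∑' k : Fin n → ℤ,
        ‖fourierTransformAt n (fun v => ((δ ^ n)⁻¹ : ℝ) • g₁ (δ⁻¹ • v))
            (WithLp.toLp 2 (fun i => (k i : ℝ)) : EuclideanSpace ℝ (Fin n))‖) ≤ C * (δ ^ n)⁻¹ := by
  classical
  obtain ⟨D, hD0, hD⟩ := aux_decay (SchwartzMap.fourierTransformCLM ℝ g₁)
  set G := SchwartzMap.fourierTransformCLM ℝ g₁ with hGdef
  have hG : ∀ w, 𝓕 ⇑g₁ w = G w := fun w => rfl
  refine ⟨D * 4 ^ n, fun δ hδ hδ1 => ?_⟩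
  have key : ∀ k : Fin n → ℤ,
      ‖fourierTransformAt n (fun v => ((δ ^ n)⁻¹ : ℝ) • g₁ (δ⁻¹ • v))
          (WithLp.toLp 2 (fun i => (k i : ℝ)) : EuclideanSpace ℝ (Fin n))‖
        ≤ D * ∏ i, ((1 + δ * |(k i : ℝ)|) ^ 2)⁻¹ := by
    intro k
    set ξk : EuclideanSpace ℝ (Fin n) := (WithLp.toLp 2 (fun i => (k i : ℝ)) : EuclideanSpace ℝ (Fin n))
    rw [aux_scale g₁ hδ ξk, hG]
    set w := δ • ξk with hw
    have hprod : (∏ i, ((1 + δ * |(k i : ℝ)|) ^ 2)) ≤ (1 + ‖w‖) ^ (2 * n) := by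
      rw [pow_mul]
      calc ∏ i, ((1 + δ * |(k i : ℝ)|) ^ 2)
          ≤ ∏ _i : Fin n, ((1 + ‖w‖) ^ 2) := by
            apply Finset.prod_le_prod
            · intro i _; positivity
            · intro i _
              have h1 : δ * |(k i : ℝ)| ≤ ‖w‖ := by
                rw [hw, norm_smul, Real.norm_eq_abs, abs_of_pos hδ]
                exact mul_le_mul_of_nonneg_left (aux_abs_coord_le_norm ξk i) hδ.le
              have h2 : (0:ℝ) ≤ δ * |(k i : ℝ)| := by positivity
              nlinarith [norm_nonneg w]
        _ = ((1 + ‖w‖) ^ 2) ^ n := by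
            rw [Finset.prod_const, Finset.card_univ, Fintype.card_fin]
    have hp : (0:ℝ) < ∏ i, ((1 + δ * |(k i : ℝ)|) ^ 2) :=
      Finset.prod_pos fun i _ => by positivity
    rw [Finset.prod_inv_distrib, ← div_eq_mul_inv, le_div_iff₀ hp]
    calc ‖G w‖ * ∏ i, ((1 + δ * |(k i : ℝ)|) ^ 2)
        ≤ ‖G w‖ * (1 + ‖w‖) ^ (2 * n) :=
          mul_le_mul_of_nonneg_left hprod (norm_nonneg _)
      _ = (1 + ‖w‖) ^ (2 * n) * ‖G w‖ := mul_comm _ _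
      _ ≤ D := hD w
  have hfin : ∀ s : Finset (Fin n → ℤ),
      ∑ k ∈ s, ‖fourierTransformAt n (fun v => ((δ ^ n)⁻¹ : ℝ) • g₁ (δ⁻¹ • v))
          (WithLp.toLp 2 (fun i => (k i : ℝ)) : EuclideanSpace ℝ (Fin n))‖ ≤ D * 4 ^ n * (δ ^ n)⁻¹ := by
    intro s
    set T : Finset ℤ := s.biUnion (fun k => Finset.image k Finset.univ) with hT
    have hsub : s ⊆ Fintype.piFinset (fun _ : Fin n => T) := by
      intro k hk
      rw [Fintype.mem_piFinset]
      intro i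
      exact Finset.mem_biUnion.mpr ⟨k, hk, Finset.mem_image.mpr ⟨i, Finset.mem_univ i, rfl⟩⟩
    calc ∑ k ∈ s, ‖fourierTransformAt n (fun v => ((δ ^ n)⁻¹ : ℝ) • g₁ (δ⁻¹ • v))
            (WithLp.toLp 2 (fun i => (k i : ℝ)) : EuclideanSpace ℝ (Fin n))‖
        ≤ ∑ k ∈ s, D * ∏ i, ((1 + δ * |(k i : ℝ)|) ^ 2)⁻¹ :=
          Finset.sum_le_sum fun k _ => key k
      _ = D * ∑ k ∈ s, ∏ i, ((1 + δ * |(k i : ℝ)|) ^ 2)⁻¹ := by rw [Finset.mul_sum]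
      _ ≤ D * ∑ k ∈ Fintype.piFinset (fun _ : Fin n => T),
            ∏ i, ((1 + δ * |(k i : ℝ)|) ^ 2)⁻¹ := by
          apply mul_le_mul_of_nonneg_left ?_ hD0
          apply Finset.sum_le_sum_of_subset_of_nonneg hsub
          intro k _ _
          exact Finset.prod_nonneg fun i _ => by positivity
      _ = D * ∏ _i : Fin n, ∑ m ∈ T, ((1 + δ * |(m : ℝ)|) ^ 2)⁻¹ := by
          rw [Finset.prod_univ_sum]
      _ ≤ D * ∏ _i : Fin n, (4 * δ⁻¹) := by
          apply mul_le_mul_of_nonneg_left ?_ hD0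
          apply Finset.prod_le_prod
          · intro i _
            exact Finset.sum_nonneg fun m _ => by positivity
          · intro i _
            exact aux_int_finset δ hδ hδ1 T
      _ = D * 4 ^ n * (δ ^ n)⁻¹ := by
          rw [Finset.prod_const, Finset.card_univ, Fintype.card_fin, mul_pow, inv_pow,
            mul_assoc]
  have hsummable := summable_of_sum_le (fun k => norm_nonneg _) hfin
  exact ⟨hsummable, Summable.tsum_le_of_sum_le hsummable hfin⟩
end
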